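/- Under the rank condition, Δ̂ is invertible and Δ̂⁻¹ satisfies the Loewner-order bounds Ω̂_IV ≤ Δ̂⁻¹ ≤ Ω̂_LS Σ̂_V⁻¹ Ω̂_LS (i.e., Δ̂⁻¹ − Ω̂_IV and Ω̂_LS Σ̂_V⁻¹ Ω̂_LS − Δ̂⁻¹ are positive semidefinite); consequently, (β̃−β̂)ᵀ Ω̂_IV (β̃−β̂) ≤ (β̃−β̂)ᵀ Δ̂⁻¹ (β̃−β̂) ≤ (β̃−β̂)ᵀ Ω̂_LS Σ̂_V⁻¹ Ω̂_LS (β̃−β̂). -/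

import Mathlib

open Matrix

variable {T G k₁ k₂ : ℕ}

/-- Orthogonal projection `P̄[A] = A(AᵀA)⁻¹Aᵀ` onto the column space of `A`. -/
noncomputable def projM {n : Type*} [Fintype n] [DecidableEq n]
    (A : Matrix (Fin T) n ℝ) : Matrix (Fin T) (Fin T) ℝ :=
  A * (Aᵀ * A)⁻¹ * Aᵀ

/-- The annihilator `M̄[A] = I - P̄[A]`. -/
noncomputable def annM {n : Type*} [Fintype n] [DecidableEq n]
    (A : Matrix (Fin T) n ℝ) : Matrix (Fin T) (Fin T) ℝ :=
  1 - projM A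

noncomputable def M1 (X₁ : Matrix (Fin T) (Fin k₁) ℝ) : Matrix (Fin T) (Fin T) ℝ :=
  annM X₁

noncomputable def Pm (X₁ : Matrix (Fin T) (Fin k₁) ℝ) (X₂ : Matrix (Fin T) (Fin k₂) ℝ) :
    Matrix (Fin T) (Fin T) ℝ :=
  projM (fromCols X₁ X₂)

noncomputable def Mm (X₁ : Matrix (Fin T) (Fin k₁) ℝ) (X₂ : Matrix (Fin T) (Fin k₂) ℝ) :
    Matrix (Fin T) (Fin T) ℝ :=
  annM (fromCols X₁ X₂)

noncomputable def N1 (X₁ : Matrix (Fin T) (Fin k₁) ℝ) (X₂ : Matrix (Fin T) (Fin k₂) ℝ) :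
    Matrix (Fin T) (Fin T) ℝ :=
  M1 X₁ * Pm X₁ X₂

noncomputable def B1 (Y : Matrix (Fin T) (Fin G) ℝ) (X₁ : Matrix (Fin T) (Fin k₁) ℝ) :
    Matrix (Fin G) (Fin T) ℝ :=
  (Yᵀ * M1 X₁ * Y)⁻¹ * (Yᵀ * M1 X₁)

noncomputable def B2 (Y : Matrix (Fin T) (Fin G) ℝ) (X₁ : Matrix (Fin T) (Fin k₁) ℝ)
    (X₂ : Matrix (Fin T) (Fin k₂) ℝ) : Matrix (Fin G) (Fin T) ℝ :=
  (Yᵀ * N1 X₁ X₂ * Y)⁻¹ * (Yᵀ * N1 X₁ X₂)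

noncomputable def C1 (Y : Matrix (Fin T) (Fin G) ℝ) (X₁ : Matrix (Fin T) (Fin k₁) ℝ)
    (X₂ : Matrix (Fin T) (Fin k₂) ℝ) : Matrix (Fin G) (Fin T) ℝ :=
  B2 Y X₁ X₂ - B1 Y X₁

/-- OLS estimator `β̂`. -/
noncomputable def betaOLS (y : Fin T → ℝ) (Y : Matrix (Fin T) (Fin G) ℝ)
    (X₁ : Matrix (Fin T) (Fin k₁) ℝ) : Fin G → ℝ :=
  B1 Y X₁ *ᵥ y

/-- 2SLS estimator `β̃`. -/
noncomputable def beta2S (y : Fin T → ℝ) (Y : Matrix (Fin T) (Fin G) ℝ)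
    (X₁ : Matrix (Fin T) (Fin k₁) ℝ) (X₂ : Matrix (Fin T) (Fin k₂) ℝ) : Fin G → ℝ :=
  B2 Y X₁ X₂ *ᵥ y

noncomputable def OmIV (Y : Matrix (Fin T) (Fin G) ℝ) (X₁ : Matrix (Fin T) (Fin k₁) ℝ)
    (X₂ : Matrix (Fin T) (Fin k₂) ℝ) : Matrix (Fin G) (Fin G) ℝ :=
  (T : ℝ)⁻¹ • (Yᵀ * N1 X₁ X₂ * Y)

noncomputable def OmLS (Y : Matrix (Fin T) (Fin G) ℝ) (X₁ : Matrix (Fin T) (Fin k₁) ℝ) :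
    Matrix (Fin G) (Fin G) ℝ :=
  (T : ℝ)⁻¹ • (Yᵀ * M1 X₁ * Y)

noncomputable def SigV (Y : Matrix (Fin T) (Fin G) ℝ) (X₁ : Matrix (Fin T) (Fin k₁) ℝ)
    (X₂ : Matrix (Fin T) (Fin k₂) ℝ) : Matrix (Fin G) (Fin G) ℝ :=
  (T : ℝ)⁻¹ • (Yᵀ * Mm X₁ X₂ * Y)

noncomputable def Dhat (Y : Matrix (Fin T) (Fin G) ℝ) (X₁ : Matrix (Fin T) (Fin k₁) ℝ)
    (X₂ : Matrix (Fin T) (Fin k₂) ℝ) : Matrix (Fin G) (Fin G) ℝ :=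
  (OmIV Y X₁ X₂)⁻¹ - (OmLS Y X₁)⁻¹

noncomputable def Psi0 (Y : Matrix (Fin T) (Fin G) ℝ) (X₁ : Matrix (Fin T) (Fin k₁) ℝ)
    (X₂ : Matrix (Fin T) (Fin k₂) ℝ) : Matrix (Fin T) (Fin T) ℝ :=
  (C1 Y X₁ X₂)ᵀ * (Dhat Y X₁ X₂)⁻¹ * C1 Y X₁ X₂

noncomputable def N2 (Y : Matrix (Fin T) (Fin G) ℝ) (X₁ : Matrix (Fin T) (Fin k₁) ℝ)
    (X₂ : Matrix (Fin T) (Fin k₂) ℝ) : Matrix (Fin T) (Fin T) ℝ :=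
  1 - M1 X₁ * Y * B2 Y X₁ X₂

noncomputable def Lam1 (Y : Matrix (Fin T) (Fin G) ℝ) (X₁ : Matrix (Fin T) (Fin k₁) ℝ)
    (X₂ : Matrix (Fin T) (Fin k₂) ℝ) : Matrix (Fin T) (Fin T) ℝ :=
  (T : ℝ)⁻¹ • (N1 X₁ X₂ * annM (N1 X₁ X₂ * Y) * N1 X₁ X₂)

noncomputable def Lam2 (Y : Matrix (Fin T) (Fin G) ℝ) (X₁ : Matrix (Fin T) (Fin k₁) ℝ)
    (X₂ : Matrix (Fin T) (Fin k₂) ℝ) : Matrix (Fin T) (Fin T) ℝ :=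
  M1 X₁ * ((T : ℝ)⁻¹ • annM (M1 X₁ * Y) - Psi0 Y X₁ X₂) * M1 X₁

noncomputable def Lam3 (Y : Matrix (Fin T) (Fin G) ℝ) (X₁ : Matrix (Fin T) (Fin k₁) ℝ)
    (X₂ : Matrix (Fin T) (Fin k₂) ℝ) : Matrix (Fin T) (Fin T) ℝ :=
  (T : ℝ)⁻¹ • (M1 X₁ * (N2 Y X₁ X₂)ᵀ * N2 Y X₁ X₂ * M1 X₁)

noncomputable def Lam4 (Y : Matrix (Fin T) (Fin G) ℝ) (X₁ : Matrix (Fin T) (Fin k₁) ℝ) :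
    Matrix (Fin T) (Fin T) ℝ :=
  (T : ℝ)⁻¹ • (M1 X₁ * annM (M1 X₁ * Y) * M1 X₁)

def Ybar (Y : Matrix (Fin T) (Fin G) ℝ) (X₁ : Matrix (Fin T) (Fin k₁) ℝ) :
    Matrix (Fin T) (Fin G ⊕ Fin k₁) ℝ :=
  fromCols Y X₁

def Zfull (Y : Matrix (Fin T) (Fin G) ℝ) (X₁ : Matrix (Fin T) (Fin k₁) ℝ)
    (X₂ : Matrix (Fin T) (Fin k₂) ℝ) : Matrix (Fin T) (Fin G ⊕ (Fin k₁ ⊕ Fin k₂)) ℝ :=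
  fromCols Y (fromCols X₁ X₂)

noncomputable def PsiR (Y : Matrix (Fin T) (Fin G) ℝ) (X₁ : Matrix (Fin T) (Fin k₁) ℝ)
    (X₂ : Matrix (Fin T) (Fin k₂) ℝ) : Matrix (Fin T) (Fin T) ℝ :=
  (T : ℝ)⁻¹ • (annM (Ybar Y X₁) - annM (Zfull Y X₁ X₂))

noncomputable def LamR (Y : Matrix (Fin T) (Fin G) ℝ) (X₁ : Matrix (Fin T) (Fin k₁) ℝ)
    (X₂ : Matrix (Fin T) (Fin k₂) ℝ) : Matrix (Fin T) (Fin T) ℝ :=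
  (T : ℝ)⁻¹ • annM (Zfull Y X₁ X₂)

/-- `σ̂² = (1/T)(y−Yβ̂)ᵀM₁(y−Yβ̂)`. -/
noncomputable def sigHat2 (y : Fin T → ℝ) (Y : Matrix (Fin T) (Fin G) ℝ)
    (X₁ : Matrix (Fin T) (Fin k₁) ℝ) : ℝ :=
  (T : ℝ)⁻¹ * ((y - Y *ᵥ betaOLS y Y X₁) ⬝ᵥ (M1 X₁ *ᵥ (y - Y *ᵥ betaOLS y Y X₁)))

/-- `σ̃² = (1/T)(y−Yβ̃)ᵀM₁(y−Yβ̃)`. -/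
noncomputable def sigTil2 (y : Fin T → ℝ) (Y : Matrix (Fin T) (Fin G) ℝ)
    (X₁ : Matrix (Fin T) (Fin k₁) ℝ) (X₂ : Matrix (Fin T) (Fin k₂) ℝ) : ℝ :=
  (T : ℝ)⁻¹ * ((y - Y *ᵥ beta2S y Y X₁ X₂) ⬝ᵥ (M1 X₁ *ᵥ (y - Y *ᵥ beta2S y Y X₁ X₂)))

/-- `σ̃₁² = (1/T)(y−Yβ̃)ᵀN₁(y−Yβ̃)`. -/
noncomputable def sigTil1sq (y : Fin T → ℝ) (Y : Matrix (Fin T) (Fin G) ℝ)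
    (X₁ : Matrix (Fin T) (Fin k₁) ℝ) (X₂ : Matrix (Fin T) (Fin k₂) ℝ) : ℝ :=
  (T : ℝ)⁻¹ * ((y - Y *ᵥ beta2S y Y X₁ X₂) ⬝ᵥ (N1 X₁ X₂ *ᵥ (y - Y *ᵥ beta2S y Y X₁ X₂)))

/-- `σ̃₂² = σ̂² − (β̃−β̂)ᵀΔ̂⁻¹(β̃−β̂)`. -/
noncomputable def sigTil2sq (y : Fin T → ℝ) (Y : Matrix (Fin T) (Fin G) ℝ)
    (X₁ : Matrix (Fin T) (Fin k₁) ℝ) (X₂ : Matrix (Fin T) (Fin k₂) ℝ) : ℝ :=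
  sigHat2 y Y X₁ -
    (beta2S y Y X₁ X₂ - betaOLS y Y X₁) ⬝ᵥ
      ((Dhat Y X₁ X₂)⁻¹ *ᵥ (beta2S y Y X₁ X₂ - betaOLS y Y X₁))

/-- The rank condition: `X₁`, `X = [X₁, X₂]`, `[Y, X]` and `[P̄[X]Y, X₁]` all have
full column rank. -/
def RankCond (Y : Matrix (Fin T) (Fin G) ℝ) (X₁ : Matrix (Fin T) (Fin k₁) ℝ)
    (X₂ : Matrix (Fin T) (Fin k₂) ℝ) : Prop :=
  X₁.rank = k₁ ∧ (fromCols X₁ X₂).rank = k₁ + k₂ ∧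
    (fromCols Y (fromCols X₁ X₂)).rank = G + (k₁ + k₂) ∧
    (fromCols (Pm X₁ X₂ * Y) X₁).rank = G + k₁

/-! With `A := Ω̂_IV` and `S := Σ̂_V`, the rank condition makes `N₁` and `M` orthogonal
projections with `M₁ = N₁ + M`, so `Ω̂_LS = A + S` with `A` and `S` positive definite.
Then `A⁻¹ - (A + S)⁻¹ = A⁻¹ S (A + S)⁻¹` is invertible with inverse
`(A + S) S⁻¹ A = A + A S⁻¹ A ≥ A`, while
`(A + S) S⁻¹ (A + S) - (A + S) S⁻¹ A = A + S ≥ 0`. -/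

open scoped MatrixOrder ComplexOrder

section InverseDifference

variable {n : Type*} [Fintype n] [DecidableEq n]

theorem Matrix.inv_sub_inv_add_mul_eq_one {K : Type*} [Field K] {A S : Matrix n n K}
    (hA : IsUnit A) (hAS : IsUnit (A + S)) (hS : IsUnit S) :
    (A⁻¹ - (A + S)⁻¹) * ((A + S) * S⁻¹ * A) = 1 := by
  rw [isUnit_iff_isUnit_det] at hA hAS hS
  have hright : (A + S)⁻¹ * ((A + S) * S⁻¹ * A) = S⁻¹ * A := by
    rw [Matrix.mul_assoc, nonsing_inv_mul_cancel_left _ _ hAS]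
  have hleft : A⁻¹ * ((A + S) * S⁻¹ * A) = S⁻¹ * A + 1 := by
    rw [Matrix.add_mul A S, mul_nonsing_inv _ hS, Matrix.add_mul, Matrix.one_mul, Matrix.mul_add,
      ← Matrix.mul_assoc, ← Matrix.mul_assoc, nonsing_inv_mul _ hA, Matrix.one_mul]
  rw [Matrix.sub_mul, hleft, hright, add_sub_cancel_left]

variable {𝕜 : Type*} [RCLike 𝕜] {A S : Matrix n n 𝕜}

theorem Matrix.PosDef.inv_inv_sub_inv_add (hA : A.PosDef) (hS : S.PosDef) :
    (A⁻¹ - (A + S)⁻¹)⁻¹ = (A + S) * S⁻¹ * A :=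
  inv_eq_right_inv <| inv_sub_inv_add_mul_eq_one hA.isUnit (hA.add hS).isUnit hS.isUnit

theorem Matrix.PosDef.isUnit_inv_sub_inv_add (hA : A.PosDef) (hS : S.PosDef) :
    IsUnit (A⁻¹ - (A + S)⁻¹) :=
  (isUnit_iff_isUnit_det _).mpr <| isUnit_det_of_right_inverse <|
    inv_sub_inv_add_mul_eq_one hA.isUnit (hA.add hS).isUnit hS.isUnit

theorem Matrix.PosDef.le_inv_inv_sub_inv_add (hA : A.PosDef) (hS : S.PosDef) :
    A ≤ (A⁻¹ - (A + S)⁻¹)⁻¹ := by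
  have hexpand : (A + S) * S⁻¹ * A = A * S⁻¹ * A + A := by
    rw [Matrix.add_mul, mul_nonsing_inv _ (S.isUnit_iff_isUnit_det.mp hS.isUnit),
      Matrix.add_mul, Matrix.one_mul]
  rw [Matrix.le_iff, hA.inv_inv_sub_inv_add hS, hexpand, add_sub_cancel_right]
  simpa only [hA.1.eq] using hS.inv.posSemidef.conjTranspose_mul_mul_same A

theorem Matrix.PosDef.inv_inv_sub_inv_add_le (hA : A.PosDef) (hS : S.PosDef) :
    (A⁻¹ - (A + S)⁻¹)⁻¹ ≤ (A + S) * S⁻¹ * (A + S) := by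
  rw [Matrix.le_iff, hA.inv_inv_sub_inv_add hS, ← Matrix.mul_sub, add_sub_cancel_left,
    Matrix.mul_assoc, nonsing_inv_mul _ (S.isUnit_iff_isUnit_det.mp hS.isUnit), Matrix.mul_one]
  exact (hA.add hS).posSemidef

end InverseDifference

theorem Matrix.dotProduct_mulVec_le_of_le {n : Type*} [Fintype n] {A B : Matrix n n ℝ}
    (h : A ≤ B) (x : n → ℝ) : x ⬝ᵥ (A *ᵥ x) ≤ x ⬝ᵥ (B *ᵥ x) := by
  have hnonneg := (Matrix.le_iff.mp h).dotProduct_mulVec_nonneg x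
  rw [star_trivial, sub_mulVec, dotProduct_sub] at hnonneg
  linarith

theorem Matrix.mulVec_injective_of_rank_eq_card {K m n : Type*} [Field K] [Fintype n]
    {A : Matrix m n K} (h : A.rank = Fintype.card n) :
    Function.Injective A.mulVec := by
  have hker : Module.finrank K (LinearMap.ker A.mulVecLin) = 0 := by
    have hrankNullity := LinearMap.finrank_range_add_finrank_ker A.mulVecLin
    rw [Module.finrank_fintype_fun_eq_card, ← Matrix.rank, h] at hrankNullity
    omega
  exact LinearMap.ker_eq_bot.mp (Submodule.finrank_eq_zero.mp hker)

theorem Matrix.mulVec_injective_add_mul_of_fromCols {R m n l : Type*} [Semiring R] [Fintype n]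
    [Fintype l] {W : Matrix m n R} {A : Matrix m l R}
    (h : Function.Injective (fromCols W A).mulVec) (C : Matrix l n R) :
    Function.Injective (W + A * C).mulVec := by
  have hstack (v : n → R) : fromCols W A *ᵥ Sum.elim v (C *ᵥ v) = (W + A * C) *ᵥ v := by
    rw [fromCols_mulVec_sumElim, mulVec_mulVec, add_mulVec]
  intro v w hvw
  have hstacked := @h (Sum.elim v (C *ᵥ v)) (Sum.elim w (C *ᵥ w)) (by rw [hstack, hstack, hvw])
  exact congrArg (· ∘ Sum.inl) hstacked

theorem IsStarProjection.posDef_transpose_mul_mul {m n : Type*} [Fintype m] [Fintype n]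
    {Q : Matrix m m ℝ} (hQ : IsStarProjection Q) {Y : Matrix m n ℝ}
    (hY : Function.Injective (Q * Y).mulVec) : (Yᵀ * Q * Y).PosDef := by
  have hgram : Yᵀ * Q * Y = (Q * Y)ᴴ * (Q * Y) := by
    rw [conjTranspose_mul, ← star_eq_conjTranspose, hQ.isSelfAdjoint.star_eq,
      conjTranspose_eq_transpose_of_trivial, Matrix.mul_assoc Yᵀ Q (Q * Y),
      ← Matrix.mul_assoc Q Q Y, hQ.isIdempotentElem.eq, Matrix.mul_assoc]
  rw [hgram]
  exact PosDef.conjTranspose_mul_self _ hY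

section Projection

variable {n : Type*} [Fintype n] [DecidableEq n]

theorem projM_transpose (A : Matrix (Fin T) n ℝ) : (projM A)ᵀ = projM A := by
  rw [projM, transpose_mul, transpose_mul, transpose_transpose, transpose_nonsing_inv,
    transpose_mul, transpose_transpose, Matrix.mul_assoc]

theorem projM_mul_self {A : Matrix (Fin T) n ℝ} (hA : Function.Injective A.mulVec) :
    projM A * A = A := by
  have hgram : IsUnit (Aᵀ * A).det := by
    simpa only [conjTranspose_eq_transpose_of_trivial] using
      (isUnit_iff_isUnit_det _).mp (PosDef.conjTranspose_mul_self A hA).isUnit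
  rw [projM, Matrix.mul_assoc, nonsing_inv_mul_cancel_right _ _ hgram]

theorem isStarProjection_projM {A : Matrix (Fin T) n ℝ} (hA : Function.Injective A.mulVec) :
    IsStarProjection (projM A) where
  isIdempotentElem := by
    rw [IsIdempotentElem]
    nth_rw 2 [projM]
    rw [← Matrix.mul_assoc, ← Matrix.mul_assoc, projM_mul_self hA, ← projM]
  isSelfAdjoint := by
    rw [IsSelfAdjoint, star_eq_conjTranspose, conjTranspose_eq_transpose_of_trivial,
      projM_transpose]

theorem mulVec_injective_annM_mul {m : Type*} [Fintype m] (A : Matrix (Fin T) n ℝ)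
    {W : Matrix (Fin T) m ℝ} (h : Function.Injective (fromCols W A).mulVec) :
    Function.Injective (annM A * W).mulVec := by
  have hexpand : annM A * W = W + A * -((Aᵀ * A)⁻¹ * Aᵀ * W) := by
    rw [annM, projM, Matrix.sub_mul, Matrix.one_mul, Matrix.mul_neg, ← sub_eq_add_neg,
      Matrix.mul_assoc A, Matrix.mul_assoc A]
  rw [hexpand]
  exact mulVec_injective_add_mul_of_fromCols h _

theorem projM_mul_projM_of_mul_eq {m : Type*} [Fintype m] [DecidableEq m]
    {A : Matrix (Fin T) n ℝ} {B : Matrix (Fin T) m ℝ} (hB : projM A * B = B) :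
    projM B * projM A = projM B := by
  have hBt : Bᵀ * projM A = Bᵀ := by
    rw [← projM_transpose A, ← transpose_mul, hB]
  rw [projM, Matrix.mul_assoc, hBt]

theorem projM_fromCols_mul_left {m : Type*} [Fintype m] [DecidableEq m]
    {A : Matrix (Fin T) n ℝ} {B : Matrix (Fin T) m ℝ}
    (h : Function.Injective (fromCols A B).mulVec) : projM (fromCols A B) * A = A := by
  have hcols := projM_mul_self h
  rw [mul_fromCols] at hcols
  exact (fromCols_inj hcols).1

end Projection

section Model

variable {Y : Matrix (Fin T) (Fin G) ℝ} {X₁ : Matrix (Fin T) (Fin k₁) ℝ}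
  {X₂ : Matrix (Fin T) (Fin k₂) ℝ}

theorem RankCond.mulVec_injective (h : RankCond Y X₁ X₂) :
    Function.Injective X₁.mulVec ∧ Function.Injective (fromCols X₁ X₂).mulVec ∧
      Function.Injective (fromCols Y (fromCols X₁ X₂)).mulVec ∧
      Function.Injective (fromCols (Pm X₁ X₂ * Y) X₁).mulVec :=
  ⟨mulVec_injective_of_rank_eq_card (by simpa using h.1),
    mulVec_injective_of_rank_eq_card (by simpa using h.2.1),
    mulVec_injective_of_rank_eq_card (by simpa using h.2.2.1),
    mulVec_injective_of_rank_eq_card (by simpa using h.2.2.2)⟩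

theorem N1_eq_Pm_sub_projM (hX : Function.Injective (fromCols X₁ X₂).mulVec) :
    N1 X₁ X₂ = Pm X₁ X₂ - projM X₁ := by
  rw [N1, M1, annM, Matrix.sub_mul, Matrix.one_mul, Pm,
    projM_mul_projM_of_mul_eq (projM_fromCols_mul_left hX)]

theorem isStarProjection_N1 (hX₁ : Function.Injective X₁.mulVec)
    (hX : Function.Injective (fromCols X₁ X₂).mulVec) : IsStarProjection (N1 X₁ X₂) := by
  rw [N1_eq_Pm_sub_projM hX]
  exact (isStarProjection_projM hX₁).sub_of_mul_eq_left (isStarProjection_projM hX)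
    (projM_mul_projM_of_mul_eq (projM_fromCols_mul_left hX))

theorem OmLS_eq_OmIV_add_SigV (hX : Function.Injective (fromCols X₁ X₂).mulVec) :
    OmLS Y X₁ = OmIV Y X₁ X₂ + SigV Y X₁ X₂ := by
  have hsplit : M1 X₁ = N1 X₁ X₂ + Mm X₁ X₂ := by
    rw [N1_eq_Pm_sub_projM hX, M1, Mm, annM, annM, Pm]
    abel
  rw [OmLS, OmIV, SigV, hsplit, Matrix.mul_add, Matrix.add_mul, smul_add]

theorem RankCond.posDef_OmIV (h : RankCond Y X₁ X₂) (hT : 0 < T) :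
    (OmIV Y X₁ X₂).PosDef := by
  obtain ⟨hX₁, hX, -, hPYX₁⟩ := h.mulVec_injective
  have hN1Y : N1 X₁ X₂ * Y = annM X₁ * (Pm X₁ X₂ * Y) := Matrix.mul_assoc _ _ _
  refine PosDef.smul ((isStarProjection_N1 hX₁ hX).posDef_transpose_mul_mul ?_) (by positivity)
  rw [hN1Y]
  exact mulVec_injective_annM_mul X₁ hPYX₁

theorem RankCond.posDef_SigV (h : RankCond Y X₁ X₂) (hT : 0 < T) :
    (SigV Y X₁ X₂).PosDef := by
  obtain ⟨-, hX, hYX, -⟩ := h.mulVec_injective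
  exact PosDef.smul ((isStarProjection_projM hX).one_sub.posDef_transpose_mul_mul
    (mulVec_injective_annM_mul _ hYX)) (by positivity)

end Model

theorem stmt4_general {T G k₁ k₂ : ℕ}
    (hT : 0 < T)
    (y : Fin T → ℝ) (Y : Matrix (Fin T) (Fin G) ℝ)
    (X₁ : Matrix (Fin T) (Fin k₁) ℝ) (X₂ : Matrix (Fin T) (Fin k₂) ℝ)
    (hrank : RankCond Y X₁ X₂) :
    IsUnit (Dhat Y X₁ X₂) ∧
    ((Dhat Y X₁ X₂)⁻¹ - OmIV Y X₁ X₂).PosSemidef ∧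
    (OmLS Y X₁ * (SigV Y X₁ X₂)⁻¹ * OmLS Y X₁ - (Dhat Y X₁ X₂)⁻¹).PosSemidef ∧
    (beta2S y Y X₁ X₂ - betaOLS y Y X₁) ⬝ᵥ
        (OmIV Y X₁ X₂ *ᵥ (beta2S y Y X₁ X₂ - betaOLS y Y X₁))
      ≤ (beta2S y Y X₁ X₂ - betaOLS y Y X₁) ⬝ᵥ
          ((Dhat Y X₁ X₂)⁻¹ *ᵥ (beta2S y Y X₁ X₂ - betaOLS y Y X₁)) ∧
    (beta2S y Y X₁ X₂ - betaOLS y Y X₁) ⬝ᵥ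
        ((Dhat Y X₁ X₂)⁻¹ *ᵥ (beta2S y Y X₁ X₂ - betaOLS y Y X₁))
      ≤ (beta2S y Y X₁ X₂ - betaOLS y Y X₁) ⬝ᵥ
          ((OmLS Y X₁ * (SigV Y X₁ X₂)⁻¹ * OmLS Y X₁) *ᵥ
            (beta2S y Y X₁ X₂ - betaOLS y Y X₁)) := by
  have hΩ := hrank.posDef_OmIV hT
  have hS := hrank.posDef_SigV hT
  have lower := hΩ.le_inv_inv_sub_inv_add hS
  have upper := hΩ.inv_inv_sub_inv_add_le hS
  rw [Dhat, OmLS_eq_OmIV_add_SigV hrank.mulVec_injective.2.1]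
  exact ⟨hΩ.isUnit_inv_sub_inv_add hS, lower, upper, dotProduct_mulVec_le_of_le lower _,
    dotProduct_mulVec_le_of_le upper _⟩

/-- Under the rank condition, `Δ̂` is invertible and `Δ̂⁻¹` satisfies the Loewner bounds
`Ω̂_IV ≤ Δ̂⁻¹ ≤ Ω̂_LS Σ̂_V⁻¹ Ω̂_LS`; consequently
`(β̃−β̂)ᵀ Ω̂_IV (β̃−β̂) ≤ (β̃−β̂)ᵀ Δ̂⁻¹ (β̃−β̂) ≤ (β̃−β̂)ᵀ Ω̂_LS Σ̂_V⁻¹ Ω̂_LS (β̃−β̂)`. -/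
theorem stmt4 {T G k₁ k₂ : ℕ}
    (hT : 0 < T) (hG : 0 < G) (hk₁ : 0 < k₁) (hk₂ : 0 < k₂)
    (y : Fin T → ℝ) (Y : Matrix (Fin T) (Fin G) ℝ)
    (X₁ : Matrix (Fin T) (Fin k₁) ℝ) (X₂ : Matrix (Fin T) (Fin k₂) ℝ)
    (hrank : RankCond Y X₁ X₂) :
    IsUnit (Dhat Y X₁ X₂) ∧
    ((Dhat Y X₁ X₂)⁻¹ - OmIV Y X₁ X₂).PosSemidef ∧
    (OmLS Y X₁ * (SigV Y X₁ X₂)⁻¹ * OmLS Y X₁ - (Dhat Y X₁ X₂)⁻¹).PosSemidef ∧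
    (beta2S y Y X₁ X₂ - betaOLS y Y X₁) ⬝ᵥ
        (OmIV Y X₁ X₂ *ᵥ (beta2S y Y X₁ X₂ - betaOLS y Y X₁))
      ≤ (beta2S y Y X₁ X₂ - betaOLS y Y X₁) ⬝ᵥ
          ((Dhat Y X₁ X₂)⁻¹ *ᵥ (beta2S y Y X₁ X₂ - betaOLS y Y X₁)) ∧
    (beta2S y Y X₁ X₂ - betaOLS y Y X₁) ⬝ᵥ
        ((Dhat Y X₁ X₂)⁻¹ *ᵥ (beta2S y Y X₁ X₂ - betaOLS y Y X₁))
      ≤ (beta2S y Y X₁ X₂ - betaOLS y Y X₁) ⬝ᵥ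
          ((OmLS Y X₁ * (SigV Y X₁ X₂)⁻¹ * OmLS Y X₁) *ᵥ
            (beta2S y Y X₁ X₂ - betaOLS y Y X₁)) :=
  stmt4_general hT y Y X₁ X₂ hrank
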